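/- Let λ ∈ ℝ^n be nonzero with λ_1 ≥ λ_2 ≥ … ≥ λ_n ≥ 0, let τ > 0 and b ∈ ℝ^n. Then the function φ(y) = ½‖Π_C(yλ + b)‖² − yτ − ½‖b‖² attains its minimum over ℝ at exactly one point; that is, there exists a unique y* ∈ ℝ such that φ(y*) ≤ φ(y) for all y ∈ ℝ. -/

import Mathlib

/-! For a closed convex cone `C` and `p = Π_C(d)`, the vector `d - p` is orthogonal to `p` and
lies in the polar cone, which gives
`⟪x, d⟫ - ‖x‖²/2 + ‖x - p‖²/2 ≤ ‖p‖²/2` for all `x ∈ C`, with equality at `x = p`.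
So `φ(y) + ‖b‖²/2` is the pointwise maximum over `x ∈ C` of the affine functions
`y ↦ ⟪x, yλ + b⟫ - ‖x‖²/2 - yτ`, and the maximum at `y` is attained only at `Π_C(yλ + b)`.
Hence `φ` is convex, and hence continuous; the minorants for `x = 0` and for a large
multiple of `λ` make it coercive, so it has a minimizer. If `y₁` and `y₂` are minimizers,
the maximizing `x` at their midpoint must also be maximizing at `y₁` and at `y₂`, so
`Π_C(y₁λ + b) = Π_C(y₂λ + b)`; then `φ(y₁) - φ(y₂) = (y₂ - y₁)τ` forces `y₁ = y₂`. -/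

open Matrix

/-- The matrix `B` with `(Bx)_i = x_i − x_{i+1}` for `1 ≤ i ≤ n−1` and `(Bx)_n = x_n`. -/
def Bmat (n : ℕ) : Matrix (Fin n) (Fin n) ℝ :=
  Matrix.of fun i j => if j = i then 1 else if (j : ℕ) = (i : ℕ) + 1 then -1 else 0

/-- `B_Γ`, the submatrix of `B` formed by the rows indexed by `Γ`. -/
def subRows {n : ℕ} (Γ : Finset (Fin n)) : Matrix {i // i ∈ Γ} (Fin n) ℝ :=
  Matrix.of fun i j => Bmat n i.1 j

/-- `H = I_n − B_Γᵀ (B_Γ B_Γᵀ)⁻¹ B_Γ`, the orthogonal projection onto the null space of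
`B_Γ` (equal to `I_n` when `Γ = ∅`). -/
noncomputable def Hmat {n : ℕ} (Γ : Finset (Fin n)) : Matrix (Fin n) (Fin n) ℝ :=
  1 - (subRows Γ)ᵀ * (subRows Γ * (subRows Γ)ᵀ)⁻¹ * subRows Γ

/-- The monotone nonnegative cone `C = {x : x₁ ≥ x₂ ≥ … ≥ xₙ ≥ 0}`. -/
def coneC (n : ℕ) : Set (Fin n → ℝ) :=
  {x | (∀ i j : Fin n, i ≤ j → x j ≤ x i) ∧ ∀ i, 0 ≤ x i}

/-- `Pc` is the Euclidean (metric) projection onto the cone `C`: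
`Pc d` minimizes `½‖x − d‖²` over `x ∈ C`. -/
def IsProjC {n : ℕ} (Pc : (Fin n → ℝ) → Fin n → ℝ) : Prop :=
  ∀ d : Fin n → ℝ, Pc d ∈ coneC n ∧
    ∀ x ∈ coneC n, (1/2) * ∑ i, (Pc d i - d i)^2 ≤ (1/2) * ∑ i, (x i - d i)^2

/-- `z(d) = (Bᵀ)⁻¹(d − Π_C(d))`. -/
noncomputable def zdual {n : ℕ} (Pc : (Fin n → ℝ) → Fin n → ℝ) (d : Fin n → ℝ) :
    Fin n → ℝ :=
  Matrix.mulVec ((Bmat n)ᵀ)⁻¹ (d - Pc d)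

/-- `K(d) = {Γ : Supp(z(d)) ⊆ Γ ⊆ I(Π_C(d))}`. -/
def Kset {n : ℕ} (Pc : (Fin n → ℝ) → Fin n → ℝ) (d : Fin n → ℝ) :
    Set (Finset (Fin n)) :=
  {Γ | (∀ i, zdual Pc d i ≠ 0 → i ∈ Γ) ∧ ∀ i ∈ Γ, (Bmat n).mulVec (Pc d) i = 0}

/-- `H(d) = {I_n − B_Γᵀ(B_Γ B_Γᵀ)⁻¹ B_Γ : Γ ∈ K(d)}`, the HS-Jacobian of `Π_C` at `d`. -/
def Hset {n : ℕ} (Pc : (Fin n → ℝ) → Fin n → ℝ) (d : Fin n → ℝ) :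
    Set (Matrix (Fin n) (Fin n) ℝ) :=
  {H | ∃ Γ ∈ Kset Pc d, H = Hmat Γ}

/-- `M(y) = {λᵀHλ : H ∈ H(yλ + b)}`. -/
def Mset {n : ℕ} (Pc : (Fin n → ℝ) → Fin n → ℝ) (lam b : Fin n → ℝ) (y : ℝ) : Set ℝ :=
  {m | ∃ H ∈ Hset Pc (y • lam + b), m = dotProduct lam (H.mulVec lam)}

/-- The dual objective `φ(y) = ½‖Π_C(yλ + b)‖² − yτ − ½‖b‖²`. -/
noncomputable def phiFun {n : ℕ} (Pc : (Fin n → ℝ) → Fin n → ℝ) (lam b : Fin n → ℝ)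
    (τ : ℝ) : ℝ → ℝ :=
  fun y => (1/2) * ∑ i, (Pc (y • lam + b) i)^2 - y * τ - (1/2) * ∑ i, (b i)^2

/-- `ψ(y) = ⟨Π_C(yλ + b), λ⟩ − τ` (the derivative `φ′` of the dual objective). -/
noncomputable def psiFun {n : ℕ} (Pc : (Fin n → ℝ) → Fin n → ℝ) (lam b : Fin n → ℝ)
    (τ : ℝ) : ℝ → ℝ :=
  fun y => (∑ i, Pc (y • lam + b) i * lam i) - τ

/-- The Euclidean norm on `ℝⁿ`. -/
noncomputable def enorm {n : ℕ} (x : Fin n → ℝ) : ℝ :=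
  Real.sqrt (∑ i, (x i)^2)

open Filter Set
open scoped RealInnerProductSpace

section MetricProjection

variable {E : Type*} [NormedAddCommGroup E] [InnerProductSpace ℝ E]

def IsMetricProjection (K : Set E) (proj : E → E) : Prop :=
  ∀ d, proj d ∈ K ∧ ∀ x ∈ K, ‖d - proj d‖ ≤ ‖d - x‖

namespace IsMetricProjection

variable {proj : E → E}

theorem inner_sub_sub_nonpos {K : Set E} (hproj : IsMetricProjection K proj) (hK : Convex ℝ K)
    (d : E) {x : E} (hx : x ∈ K) : ⟪d - proj d, x - proj d⟫ ≤ 0 := by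
  obtain ⟨hmem, hmin⟩ := hproj d
  have : Nonempty K := ⟨⟨_, hmem⟩⟩
  have hbdd : BddBelow (range fun w : K => ‖d - w‖) := ⟨0, by rintro _ ⟨w, rfl⟩; positivity⟩
  refine (norm_eq_iInf_iff_real_inner_le_zero hK hmem).mp ?_ x hx
  exact le_antisymm (le_ciInf fun w => hmin w w.2) (ciInf_le hbdd ⟨_, hmem⟩)

variable {K : PointedCone ℝ E}

theorem inner_sub_self_eq_zero (hproj : IsMetricProjection K proj) (d : E) :
    ⟪d - proj d, proj d⟫ = 0 := by
  have hmem := (hproj d).1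
  have h0 := hproj.inner_sub_sub_nonpos K.convex d K.zero_mem
  have h2 := hproj.inner_sub_sub_nonpos K.convex d (K.add_mem hmem hmem)
  rw [zero_sub, inner_neg_right] at h0
  rw [add_sub_cancel_right] at h2
  linarith

theorem inner_sub_nonpos (hproj : IsMetricProjection K proj) (d : E) {x : E} (hx : x ∈ K) :
    ⟪d - proj d, x⟫ ≤ 0 := by
  have h := hproj.inner_sub_sub_nonpos K.convex d hx
  rwa [inner_sub_right, hproj.inner_sub_self_eq_zero, sub_zero] at h

theorem inner_self_sub_half_norm_sq (hproj : IsMetricProjection K proj) (d : E) :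
    ⟪proj d, d⟫ - ‖proj d‖ ^ 2 / 2 = ‖proj d‖ ^ 2 / 2 := by
  have h := hproj.inner_sub_self_eq_zero d
  rw [inner_sub_left, real_inner_comm, real_inner_self_eq_norm_sq] at h
  linarith

theorem inner_sub_half_norm_sq_add_le (hproj : IsMetricProjection K proj) (d : E) {x : E}
    (hx : x ∈ K) : ⟪x, d⟫ - ‖x‖ ^ 2 / 2 + ‖x - proj d‖ ^ 2 / 2 ≤ ‖proj d‖ ^ 2 / 2 := by
  have h := hproj.inner_sub_nonpos d hx
  have hsq := norm_sub_sq_real x (proj d)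
  rw [inner_sub_left, real_inner_comm] at h
  rw [real_inner_comm (proj d)] at hsq
  linarith

end IsMetricProjection

end MetricProjection

section DualObjective

variable {E : Type*} [NormedAddCommGroup E] [InnerProductSpace ℝ E]
  {K : PointedCone ℝ E} {proj : E → E} {lam b : E} {τ : ℝ}

noncomputable def dualObjective (proj : E → E) (lam b : E) (τ y : ℝ) : ℝ :=
  ‖proj (y • lam + b)‖ ^ 2 / 2 - y * τ

noncomputable def affineMinorant (lam b : E) (τ : ℝ) (x : E) (y : ℝ) : ℝ :=
  y * (⟪x, lam⟫ - τ) + ⟪x, b⟫ - ‖x‖ ^ 2 / 2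

theorem affineMinorant_eq (x : E) (y : ℝ) :
    affineMinorant lam b τ x y = ⟪x, y • lam + b⟫ - ‖x‖ ^ 2 / 2 - y * τ := by
  rw [affineMinorant, inner_add_right, real_inner_smul_right]
  ring

theorem affineMinorant_add_le_dualObjective (hproj : IsMetricProjection K proj) {x : E}
    (hx : x ∈ K) (y : ℝ) :
    affineMinorant lam b τ x y + ‖x - proj (y • lam + b)‖ ^ 2 / 2 ≤
      dualObjective proj lam b τ y := by
  have h := hproj.inner_sub_half_norm_sq_add_le (y • lam + b) hx
  rw [affineMinorant_eq, dualObjective]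
  linarith

theorem affineMinorant_le_dualObjective (hproj : IsMetricProjection K proj) {x : E}
    (hx : x ∈ K) (y : ℝ) : affineMinorant lam b τ x y ≤ dualObjective proj lam b τ y :=
  (le_add_of_nonneg_right (by positivity)).trans (affineMinorant_add_le_dualObjective hproj hx y)

theorem affineMinorant_proj (hproj : IsMetricProjection K proj) (y : ℝ) :
    affineMinorant lam b τ (proj (y • lam + b)) y = dualObjective proj lam b τ y := by
  rw [affineMinorant_eq, dualObjective, hproj.inner_self_sub_half_norm_sq]

theorem affineMinorant_convex_combination (x : E) {s t : ℝ} (hst : s + t = 1) (y₁ y₂ : ℝ) :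
    affineMinorant lam b τ x (s * y₁ + t * y₂) =
      s * affineMinorant lam b τ x y₁ + t * affineMinorant lam b τ x y₂ := by
  simp only [affineMinorant]
  linear_combination (-⟪x, b⟫ + ‖x‖ ^ 2 / 2) * hst

theorem convexOn_dualObjective (hproj : IsMetricProjection K proj) :
    ConvexOn ℝ univ (dualObjective proj lam b τ) := by
  refine ⟨convex_univ, fun y₁ _ y₂ _ s t hs ht hst => ?_⟩
  have hp : proj ((s * y₁ + t * y₂) • lam + b) ∈ K := (hproj _).1
  simp only [smul_eq_mul]
  rw [← affineMinorant_proj hproj, affineMinorant_convex_combination _ hst]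
  gcongr <;> exact affineMinorant_le_dualObjective hproj hp _

theorem tendsto_dualObjective_cocompact_atTop (hproj : IsMetricProjection K proj) (hτ : 0 < τ)
    (hlam : ∃ x ∈ K, 0 < ⟪x, lam⟫) :
    Tendsto (dualObjective proj lam b τ) (cocompact ℝ) atTop := by
  rw [cocompact_eq_atBot_atTop, tendsto_sup]
  constructor
  · refine tendsto_atTop_mono (affineMinorant_le_dualObjective hproj K.zero_mem) ?_
    refine (tendsto_neg_atBot_atTop.atTop_mul_const hτ).congr fun y => ?_
    simp [affineMinorant]
  · obtain ⟨x, hx, hxlam⟩ := hlam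
    set t := (τ + 1) / ⟪x, lam⟫
    have ht : 0 ≤ t := by positivity
    have hslope : ⟪t • x, lam⟫ - τ = 1 := by
      rw [real_inner_smul_left, div_mul_cancel₀ _ hxlam.ne']
      ring
    refine tendsto_atTop_mono (affineMinorant_le_dualObjective hproj (K.smul_mem ht hx)) ?_
    change Tendsto (fun y => y * (⟪t • x, lam⟫ - τ) + ⟪t • x, b⟫ - ‖t • x‖ ^ 2 / 2) atTop atTop
    simp only [hslope, mul_one, add_sub_assoc]
    exact tendsto_atTop_add_const_right _ _ tendsto_id

theorem proj_eq_of_forall_dualObjective_le (hproj : IsMetricProjection K proj) {z₁ z₂ : ℝ}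
    (h₁ : ∀ y, dualObjective proj lam b τ z₁ ≤ dualObjective proj lam b τ y)
    (h₂ : ∀ y, dualObjective proj lam b τ z₂ ≤ dualObjective proj lam b τ y) :
    proj (z₁ • lam + b) = proj (z₂ • lam + b) := by
  set p := proj ((2⁻¹ * z₁ + 2⁻¹ * z₂) • lam + b)
  have hp : p ∈ K := (hproj _).1
  have hmid := affineMinorant_convex_combination (lam := lam) (b := b) (τ := τ) p
    (by norm_num : (2⁻¹ : ℝ) + 2⁻¹ = 1) z₁ z₂
  rw [affineMinorant_proj hproj] at hmid
  have e₁ := affineMinorant_add_le_dualObjective (lam := lam) (b := b) (τ := τ) hproj hp z₁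
  have e₂ := affineMinorant_add_le_dualObjective (lam := lam) (b := b) (τ := τ) hproj hp z₂
  have hle := h₁ (2⁻¹ * z₁ + 2⁻¹ * z₂)
  have h₁₂ := h₁ z₂
  have h₂₁ := h₂ z₁
  have hd₁ : ‖p - proj (z₁ • lam + b)‖ ^ 2 ≤ 0 := by
    linarith [sq_nonneg ‖p - proj (z₂ • lam + b)‖]
  have hd₂ : ‖p - proj (z₂ • lam + b)‖ ^ 2 ≤ 0 := by
    linarith [sq_nonneg ‖p - proj (z₁ • lam + b)‖]
  rw [sq_nonpos_iff, norm_eq_zero, sub_eq_zero] at hd₁ hd₂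
  rw [← hd₁, ← hd₂]

theorem eq_of_forall_dualObjective_le (hproj : IsMetricProjection K proj) (hτ : τ ≠ 0)
    {z₁ z₂ : ℝ} (h₁ : ∀ y, dualObjective proj lam b τ z₁ ≤ dualObjective proj lam b τ y)
    (h₂ : ∀ y, dualObjective proj lam b τ z₂ ≤ dualObjective proj lam b τ y) : z₁ = z₂ := by
  have hf : dualObjective proj lam b τ z₁ = dualObjective proj lam b τ z₂ :=
    (h₁ z₂).antisymm (h₂ z₁)
  rw [dualObjective, dualObjective, proj_eq_of_forall_dualObjective_le hproj h₁ h₂] at hf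
  exact mul_right_cancel₀ hτ (by linarith)

theorem existsUnique_forall_dualObjective_le (hproj : IsMetricProjection K proj) (hτ : 0 < τ)
    (hlam : ∃ x ∈ K, 0 < ⟪x, lam⟫) :
    ∃! z, ∀ y, dualObjective proj lam b τ z ≤ dualObjective proj lam b τ y := by
  obtain ⟨z, hz⟩ := (convexOn_dualObjective hproj).locallyLipschitz.continuous.exists_forall_le
    (tendsto_dualObjective_cocompact_atTop hproj hτ hlam)
  exact ⟨z, hz, fun z' hz' => eq_of_forall_dualObjective_le hproj hτ.ne' hz' hz⟩

end DualObjective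

section MonotoneCone

variable {n : ℕ}

def monotoneCone (n : ℕ) : PointedCone ℝ (EuclideanSpace ℝ (Fin n)) where
  carrier := {x | WithLp.ofLp x ∈ coneC n}
  add_mem' hx hy :=
    ⟨fun i j hij => add_le_add (hx.1 i j hij) (hy.1 i j hij),
      fun i => add_nonneg (hx.2 i) (hy.2 i)⟩
  zero_mem' := ⟨fun _ _ _ => le_rfl, fun _ => le_rfl⟩
  smul_mem' c _ hx :=
    ⟨fun i j hij => mul_le_mul_of_nonneg_left (hx.1 i j hij) c.2,
      fun i => mul_nonneg c.2 (hx.2 i)⟩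

theorem IsProjC.isMetricProjection {Pc : (Fin n → ℝ) → Fin n → ℝ} (hPc : IsProjC Pc) :
    IsMetricProjection (monotoneCone n) fun d => WithLp.toLp 2 (Pc (WithLp.ofLp d)) := by
  intro d
  obtain ⟨hmem, hmin⟩ := hPc (WithLp.ofLp d)
  refine ⟨hmem, fun x hx => ?_⟩
  have h := hmin _ hx
  rw [norm_sub_rev d, norm_sub_rev d, ← sq_le_sq₀ (norm_nonneg _) (norm_nonneg _),
    EuclideanSpace.real_norm_sq_eq, EuclideanSpace.real_norm_sq_eq]
  simp only [PiLp.sub_apply]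
  linarith

theorem phiFun_eq_dualObjective (Pc : (Fin n → ℝ) → Fin n → ℝ) (lam b : Fin n → ℝ) (τ y : ℝ) :
    phiFun Pc lam b τ y =
      dualObjective (fun d => WithLp.toLp 2 (Pc (WithLp.ofLp d))) (WithLp.toLp 2 lam)
        (WithLp.toLp 2 b) τ y - (∑ i, b i ^ 2) / 2 := by
  simp [phiFun, dualObjective, EuclideanSpace.real_norm_sq_eq]
  ring

end MonotoneCone

theorem stmt15_general {n : ℕ} (lam : Fin n → ℝ)
    (hmono : ∀ i j : Fin n, i ≤ j → lam j ≤ lam i)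
    (hnonneg : ∀ i, 0 ≤ lam i) (hlam : lam ≠ 0)
    (τ : ℝ) (hτ : 0 < τ) (b : Fin n → ℝ)
    (Pc : (Fin n → ℝ) → Fin n → ℝ) (hPc : IsProjC Pc) :
    ∃! ystar : ℝ, ∀ y : ℝ, phiFun Pc lam b τ ystar ≤ phiFun Pc lam b τ y := by
  have hlamK : WithLp.toLp 2 lam ∈ monotoneCone n := ⟨hmono, hnonneg⟩
  have hlam_pos : 0 < ⟪WithLp.toLp 2 lam, WithLp.toLp 2 lam⟫ :=
    real_inner_self_pos.mpr (by simpa using hlam)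
  simp only [phiFun_eq_dualObjective, sub_le_sub_iff_right]
  exact existsUnique_forall_dualObjective_le hPc.isMetricProjection hτ ⟨_, hlamK, hlam_pos⟩

/-- the dual objective `φ(y) = ½‖Π_C(yλ + b)‖² − yτ − ½‖b‖²` attains its
minimum over `ℝ` at exactly one point. -/
theorem stmt15 {n : ℕ} (hn : 0 < n) (lam : Fin n → ℝ)
    (hmono : ∀ i j : Fin n, i ≤ j → lam j ≤ lam i)
    (hnonneg : ∀ i, 0 ≤ lam i) (hlam : lam ≠ 0)
    (τ : ℝ) (hτ : 0 < τ) (b : Fin n → ℝ)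
    (Pc : (Fin n → ℝ) → Fin n → ℝ) (hPc : IsProjC Pc) :
    ∃! ystar : ℝ, ∀ y : ℝ, phiFun Pc lam b τ ystar ≤ phiFun Pc lam b τ y :=
  stmt15_general lam hmono hnonneg hlam τ hτ b Pc hPc
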